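/- arXiv:2002.11271 — 3 statements merged into one kernel-verified Lean document; each statement's English description precedes it below -/
import Mathlib

section
/- Let u and v be distinct CNPs with no null positions and let w = u − v, with the convention w_0 = w_{n+1} = 0. Let F_w denote the partition of [0, n+1] into maximal flat intervals of w (maximal intervals on which w is constant). Then for any unit-cost function f, dist_f(u,v) ≥ ⌈(|F_w| − 1)/2⌉. -/
open scoped ENat

/-- A copy-number profile of dimension `n`: positions are `Fin n` (position `i+1` in 1-based terms),
values are non-negative integers. -/
abbrev CNP (n : ℕ) := Fin n → ℕ

/-- An event `(s, t, δ)`: affects 1-based positions in `[s, t]`, changing copy numbers by `δ`. -/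
abbrev Event := ℕ × ℕ × ℤ

/-- A valid event has `1 ≤ s ≤ t ≤ n` and `δ ≠ 0`. -/
def ValidEvent (n : ℕ) (e : Event) : Prop :=
  1 ≤ e.1 ∧ e.1 ≤ e.2.1 ∧ e.2.1 ≤ n ∧ e.2.2 ≠ 0

/-- Applying event `e = (s,t,δ)` to `u` : each 1-based position `i ∈ [s,t]` with `u_i > 0`
becomes `max(u_i + δ, 0)`; other positions are unchanged. -/
def applyEvent {n : ℕ} (u : CNP n) (e : Event) : CNP n :=
  fun i => if e.1 ≤ (i : ℕ) + 1 ∧ (i : ℕ) + 1 ≤ e.2.1 ∧ 0 < u i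
    then ((u i : ℤ) + e.2.2).toNat else u i

/-- Applying a sequence of events in order. -/
def applySeq {n : ℕ} (u : CNP n) (E : List Event) : CNP n :=
  E.foldl applyEvent u

/-- Cost of applying event `e` on `u` w.r.t. cost function `f`:
the maximum of `f (u_i) δ` over affected positions `i ∈ [s,t]`. -/
noncomputable def eventCost {n : ℕ} (f : ℕ → ℤ → ℕ∞) (u : CNP n) (e : Event) : ℕ∞ :=
  (Finset.univ.filter (fun i : Fin n => e.1 ≤ (i : ℕ) + 1 ∧ (i : ℕ) + 1 ≤ e.2.1)).sup
    (fun i => f (u i) e.2.2)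

/-- Total cost of applying a sequence of events, costs evaluated on successive profiles. -/
noncomputable def seqCost {n : ℕ} (f : ℕ → ℤ → ℕ∞) : CNP n → List Event → ℕ∞
  | _, [] => 0
  | u, e :: E => eventCost f u e + seqCost f (applyEvent u e) E

/-- `dist_f(u,v)`: minimum total cost of a sequence of valid events transforming `u` into `v`
(`⊤` if no such sequence exists). -/
noncomputable def distf {n : ℕ} (f : ℕ → ℤ → ℕ∞) (u v : CNP n) : ℕ∞ :=
  sInf { c | ∃ E : List Event, (∀ e ∈ E, ValidEvent n e) ∧ applySeq u E = v ∧ seqCost f u E = c }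

/-- A unit-cost function takes only values `1` and `∞`. -/
def UnitCost (f : ℕ → ℤ → ℕ∞) : Prop := ∀ c δ, f c δ = 1 ∨ f c δ = ⊤

/-- The most permissive cost function: every event costs `1`. -/
def anyCost : ℕ → ℤ → ℕ∞ := fun _ _ => 1

/-- `dist_any(u,v)`: minimum number of events transforming `u` into `v`. -/
noncomputable def distAny {n : ℕ} (u v : CNP n) : ℕ∞ := distf anyCost u v

/-- The difference vector `w = u - v` in 1-based indexing, extended by `w_0 = w_{n+1} = 0`. -/
def diffExt {n : ℕ} (u v : CNP n) (i : ℕ) : ℤ :=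
  if h : 1 ≤ i ∧ i ≤ n then (u ⟨i - 1, by omega⟩ : ℤ) - (v ⟨i - 1, by omega⟩ : ℤ) else 0

/-- `[a,b] ⊆ [0, n+1]` is a flat interval of `w` if `w` is constant on it. -/
def IsFlat (n : ℕ) (w : ℕ → ℤ) (a b : ℕ) : Prop :=
  a ≤ b ∧ b ≤ n + 1 ∧ ∀ i j, a ≤ i → i ≤ b → a ≤ j → j ≤ b → w i = w j

/-- A maximal flat interval: flat, and not properly contained in a flat interval. -/
def IsMaxFlat (n : ℕ) (w : ℕ → ℤ) (a b : ℕ) : Prop :=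
  IsFlat n w a b ∧ ∀ a' b', a' ≤ a → b ≤ b' → IsFlat n w a' b' → a' = a ∧ b' = b

/-- `|F_w|`: the number of maximal flat intervals of `w` over `[0, n+1]`. -/
noncomputable def numFlat (n : ℕ) (w : ℕ → ℤ) : ℕ :=
  Nat.card {p : ℕ × ℕ // IsMaxFlat n w p.1 p.2}

/-!
Call `i ∈ [0, n]` a breakpoint of `w` if `w i ≠ w (i + 1)`. Each maximal flat interval other than
the last one ends at a breakpoint, so `|F_w| ≤ #breakpoints + 1`. Copy number `0` is absorbing and
`v` has none, so no profile along a sequence reaching `v` has a null position; hence no event is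
ever clamped, and the event `(s, t, δ)` changes `w` by `δ` on `[s, t]`. This affects breakpoints
only at `s - 1` and `t`, so every event removes at most two breakpoints, and every event costs at
least `1`.
-/

def breakpoints (n : ℕ) (w : ℕ → ℤ) : Finset ℕ :=
  (Finset.range (n + 1)).filter fun i => w i ≠ w (i + 1)

section Breakpoints

variable {n : ℕ}

@[simp]
lemma breakpoints_zero : breakpoints n 0 = ∅ := by
  simp [breakpoints]

lemma breakpoints_subset_union_sub (w w' : ℕ → ℤ) :
    breakpoints n w ⊆ breakpoints n w' ∪ breakpoints n (w' - w) := by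
  intro i hi
  simp only [breakpoints, Finset.mem_union, Finset.mem_filter, Pi.sub_apply] at hi ⊢
  by_contra! h
  exact hi.2 (by linarith [h.1 hi.1, h.2 hi.1])

lemma card_breakpoints_indicator_Icc_le (s t : ℕ) (δ : ℤ) :
    (breakpoints n ((Set.Icc s t).indicator fun _ => δ)).card ≤ 2 := by
  refine (Finset.card_le_card (t := {s - 1, t}) fun i hi => ?_).trans Finset.card_le_two
  simp only [breakpoints, Finset.mem_filter, Set.indicator_apply, Set.mem_Icc] at hi
  simp only [Finset.mem_insert, Finset.mem_singleton]
  split_ifs at hi <;> omega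

lemma IsMaxFlat.mem_breakpoints {w : ℕ → ℤ} {a b : ℕ} (h : IsMaxFlat n w a b) (hb : b ≤ n) :
    b ∈ breakpoints n w := by
  obtain ⟨⟨hab, -, hflat⟩, hmax⟩ := h
  refine Finset.mem_filter.2 ⟨Finset.mem_range.2 (by omega), fun hstep => ?_⟩
  have hconst : ∀ i, a ≤ i → i ≤ b + 1 → w i = w a := by
    intro i hai hib
    rcases Nat.lt_or_ge i (b + 1) with hi | hi
    · exact hflat i a hai (by omega) le_rfl hab
    · rw [show i = b + 1 by omega, ← hstep]
      exact hflat b a hab le_rfl le_rfl hab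
  have := hmax a (b + 1) le_rfl (by omega)
    ⟨by omega, by omega, fun i j hai hib haj hjb => by rw [hconst i hai hib, hconst j haj hjb]⟩
  omega

lemma IsMaxFlat.left_eq {w : ℕ → ℤ} {a a' b : ℕ} (h : IsMaxFlat n w a b)
    (h' : IsMaxFlat n w a' b) : a = a' := by
  rcases le_total a a' with hle | hle
  · exact (h'.2 a b hle le_rfl h.1).1
  · exact ((h.2 a' b hle le_rfl h'.1).1).symm

lemma numFlat_le_card_breakpoints_add_one (w : ℕ → ℤ) :
    numFlat n w ≤ (breakpoints n w).card + 1 := by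
  let T := insert (n + 1) (breakpoints n w)
  have hT : ∀ p : {p : ℕ × ℕ // IsMaxFlat n w p.1 p.2}, p.1.2 ∈ T := by
    rintro ⟨⟨a, b⟩, hp⟩
    rcases eq_or_ne b (n + 1) with rfl | hb
    · exact Finset.mem_insert_self _ _
    · exact Finset.mem_insert_of_mem (hp.mem_breakpoints (by have := hp.1.2.1; omega))
  have hinj : Function.Injective fun p : {p : ℕ × ℕ // IsMaxFlat n w p.1 p.2} =>
      (⟨p.1.2, hT p⟩ : T) := by
    rintro ⟨⟨a, b⟩, hp⟩ ⟨⟨a', b'⟩, hq⟩ h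
    obtain rfl : b = b' := congrArg Subtype.val h
    obtain rfl := hp.left_eq hq
    rfl
  calc numFlat n w ≤ Nat.card T := Nat.card_le_card_of_injective _ hinj
    _ = T.card := Nat.card_eq_finsetCard T
    _ ≤ (breakpoints n w).card + 1 := Finset.card_insert_le _ _

end Breakpoints

section Events

variable {n : ℕ}

lemma pos_of_applyEvent_pos {u : CNP n} {e : Event} {i : Fin n} (h : 0 < applyEvent u e i) :
    0 < u i := by
  by_contra! h0
  simp [applyEvent, Nat.le_zero.1 h0] at h

lemma pos_of_applySeq_pos {u : CNP n} {E : List Event} (h : ∀ i, 0 < applySeq u E i) (i : Fin n) :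
    0 < u i := by
  induction E generalizing u with
  | nil => exact h i
  | cons e E ih => exact pos_of_applyEvent_pos (ih h)

lemma applyEvent_apply_of_mem {u : CNP n} {e : Event} {i : Fin n}
    (hi : e.1 ≤ (i : ℕ) + 1 ∧ (i : ℕ) + 1 ≤ e.2.1) (h : 0 < applyEvent u e i) :
    (applyEvent u e i : ℤ) = u i + e.2.2 := by
  have hu := pos_of_applyEvent_pos h
  simp only [applyEvent, hi, hu, and_self, if_true] at h ⊢
  omega

lemma applyEvent_apply_of_not_mem {u : CNP n} {e : Event} {i : Fin n}
    (hi : ¬(e.1 ≤ (i : ℕ) + 1 ∧ (i : ℕ) + 1 ≤ e.2.1)) : applyEvent u e i = u i := by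
  simp only [applyEvent]
  rw [if_neg fun h => hi ⟨h.1, h.2.1⟩]

lemma diffExt_self (v : CNP n) : diffExt v v = 0 := by
  funext i
  simp [diffExt]

lemma diffExt_applyEvent_sub {u v : CNP n} {e : Event} (hs : 1 ≤ e.1) (ht : e.2.1 ≤ n)
    (h : ∀ i, 0 < applyEvent u e i) :
    diffExt (applyEvent u e) v - diffExt u v = (Set.Icc e.1 e.2.1).indicator fun _ => e.2.2 := by
  funext i
  simp only [Pi.sub_apply, diffExt, Set.indicator_apply, Set.mem_Icc]
  split_ifs with hin hmem hmem
  · rw [applyEvent_apply_of_mem (by simp only; omega) (h _)]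
    ring
  · rw [applyEvent_apply_of_not_mem (by simp only; omega)]
    ring
  · omega
  · rfl

lemma card_breakpoints_le_applyEvent {u v : CNP n} {e : Event} (he : ValidEvent n e)
    (h : ∀ i, 0 < applyEvent u e i) :
    (breakpoints n (diffExt u v)).card ≤ (breakpoints n (diffExt (applyEvent u e) v)).card + 2 :=
  calc (breakpoints n (diffExt u v)).card
      ≤ (breakpoints n (diffExt (applyEvent u e) v) ∪
          breakpoints n (diffExt (applyEvent u e) v - diffExt u v)).card :=
        Finset.card_le_card (breakpoints_subset_union_sub _ _)
    _ ≤ _ := Finset.card_union_le _ _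
    _ ≤ _ := by
        rw [diffExt_applyEvent_sub he.1 he.2.2.1 h]
        exact Nat.add_le_add_left (card_breakpoints_indicator_Icc_le _ _ _) _

lemma card_breakpoints_le_two_mul_length {v : CNP n} (hv : ∀ i, 0 < v i) :
    ∀ {E : List Event} {u : CNP n}, (∀ e ∈ E, ValidEvent n e) → applySeq u E = v →
      (breakpoints n (diffExt u v)).card ≤ 2 * E.length
  | [], u, _, rfl => by simp [applySeq, diffExt_self]
  | e :: E, u, hE, hv' => by
    have hpos : ∀ i, 0 < applyEvent u e i :=
      pos_of_applySeq_pos (E := E) (by rw [show applySeq _ E = v from hv']; exact hv)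
    have hstep := card_breakpoints_le_applyEvent (v := v) (hE e List.mem_cons_self) hpos
    have hrest := card_breakpoints_le_two_mul_length hv
      (fun e' he' => hE e' (List.mem_cons_of_mem e he')) hv'
    simp only [List.length_cons]
    omega

lemma UnitCost.one_le {f : ℕ → ℤ → ℕ∞} (hf : UnitCost f) (c : ℕ) (δ : ℤ) : 1 ≤ f c δ := by
  rcases hf c δ with h | h <;> simp [h]

lemma one_le_eventCost {f : ℕ → ℤ → ℕ∞} (hf : ∀ c δ, 1 ≤ f c δ) (u : CNP n) {e : Event}
    (he : ValidEvent n e) : 1 ≤ eventCost f u e := by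
  obtain ⟨hs, hst, htn, -⟩ := he
  exact Finset.le_sup_of_le (b := ⟨e.1 - 1, by omega⟩)
    (by simp only [Finset.mem_filter, Finset.mem_univ, true_and]; omega) (hf _ _)

lemma length_le_seqCost {f : ℕ → ℤ → ℕ∞} (hf : ∀ c δ, 1 ≤ f c δ) :
    ∀ {E : List Event} (u : CNP n), (∀ e ∈ E, ValidEvent n e) → (E.length : ℕ∞) ≤ seqCost f u E
  | [], _, _ => by simp [seqCost]
  | e :: E, u, hE => by
    rw [List.length_cons, Nat.cast_succ, add_comm, seqCost]
    exact add_le_add (one_le_eventCost hf u (hE e List.mem_cons_self))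
      (length_le_seqCost hf _ fun e' he' => hE e' (List.mem_cons_of_mem e he'))

end Events

theorem stmt5_general {n : ℕ} (u v : CNP n)
    (hv : ∀ i, 0 < v i)
    (f : ℕ → ℤ → ℕ∞) (hf : UnitCost f) :
    (((numFlat n (diffExt u v) - 1 + 1) / 2 : ℕ) : ℕ∞) ≤ distf f u v := by
  refine le_sInf ?_
  rintro c ⟨E, hE, hEv, rfl⟩
  have hflat := numFlat_le_card_breakpoints_add_one (n := n) (diffExt u v)
  have hbreak := card_breakpoints_le_two_mul_length hv hE hEv
  calc (((numFlat n (diffExt u v) - 1 + 1) / 2 : ℕ) : ℕ∞) ≤ E.length := by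
        exact_mod_cast (by omega : (numFlat n (diffExt u v) - 1 + 1) / 2 ≤ E.length)
    _ ≤ seqCost f u E := length_le_seqCost hf.one_le u hE

/-- for distinct CNPs `u ≠ v` with no null positions, and any unit-cost `f`,
`dist_f(u,v) ≥ ⌈(|F_w| - 1)/2⌉`, where `F_w` is the set of maximal flat intervals of
`w = u - v` (extended by `w_0 = w_{n+1} = 0`). -/
theorem stmt5 {n : ℕ} (u v : CNP n) (huv : u ≠ v)
    (hu : ∀ i, 0 < u i) (hv : ∀ i, 0 < v i)
    (f : ℕ → ℤ → ℕ∞) (hf : UnitCost f) :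
    (((numFlat n (diffExt u v) - 1 + 1) / 2 : ℕ) : ℕ∞) ≤ distf f u v :=
  stmt5_general u v hv f hf
end

section
/- Let u, v be CNPs with no null positions, let f be a unit-cost function, and suppose w = u − v contains a staircase on [1,k] (i.e., 0 < w_1 < w_2 < ... < w_k) and dist_f(u,v) = k. Then there exists a smooth sequence transforming u into v, i.e., a sequence E = (e_1,...,e_k) with u⟨E⟩ = v where for every i ∈ [k], e_i = (i, b_i, w_{i−1} − w_i) for some b_i ≥ k (with w_0 = 0). -/
open scoped ENat

/-! Since no position of `v` is null, no event of an optimal scenario is ever truncated, so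
`w = u - v` is the weighted coverage of the `k` event intervals (weight `-δ`). Each of the `k`
positive steps `w_{q+1} - w_q` of the staircase needs an interval rising there, so the rise steps
biject the events with `[0, k)`, and every interval except the deletions reaching beyond `k`
also falls at some step `q < k`. Hanging such an interval below the one rising where it falls
gives a forest whose roots are those long deletions. The excess of a node over its children is
its staircase step, so the steps in the tree of a root add up to the weight of the root: letting
the smooth event of step `q` reach to the end of its root reproduces the coverage `w`. -/

open Finset Function

section Events

variable {n : ℕ}

def eventShift (e : Event) (p : ℕ) : ℤ :=
  if e.1 ≤ p ∧ p ≤ e.2.1 then e.2.2 else 0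

def seqShift (E : List Event) (p : ℕ) : ℤ :=
  (E.map (eventShift · p)).sum

lemma applySeq_cons (x : CNP n) (e : Event) (E : List Event) :
    applySeq x (e :: E) = applySeq (applyEvent x e) E := rfl

lemma applySeq_apply_eq_zero {x : CNP n} {i : Fin n} (h : x i = 0) (E : List Event) :
    applySeq x E i = 0 := by
  induction E generalizing x with
  | nil => exact h
  | cons e E ih => exact ih (by simp [applyEvent, h])

lemma applyEvent_apply_cast {x : CNP n} {i : Fin n} (hx : 0 < x i) (e : Event) :
    (applyEvent x e i : ℤ) = max ((x i : ℤ) + eventShift e (i + 1)) 0 := by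
  unfold applyEvent eventShift
  split_ifs <;> omega

lemma seqShift_cons (e : Event) (E : List Event) (p : ℕ) :
    seqShift (e :: E) p = eventShift e p + seqShift E p := by
  simp [seqShift]

lemma eventShift_nonpos {e : Event} (he : e.2.2 ≤ 0) (p : ℕ) : eventShift e p ≤ 0 := by
  unfold eventShift
  split_ifs <;> simp [he]

lemma seqShift_nonpos {E : List Event} (hE : ∀ e ∈ E, e.2.2 ≤ 0) (p : ℕ) :
    seqShift E p ≤ 0 := by
  induction E with
  | nil => simp [seqShift]
  | cons e E ih =>
    rw [seqShift_cons]
    linarith [eventShift_nonpos (hE e List.mem_cons_self) p,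
      ih fun e' he' ↦ hE e' (List.mem_cons_of_mem e he')]

lemma applySeq_apply_cast_of_pos {x : CNP n} {i : Fin n} {E : List Event}
    (h : 0 < applySeq x E i) : (applySeq x E i : ℤ) = x i + seqShift E (i + 1) := by
  induction E generalizing x with
  | nil => simp [applySeq, seqShift]
  | cons e E ih =>
    rw [applySeq_cons] at h ⊢
    have hy : 0 < applyEvent x e i := Nat.pos_of_ne_zero fun h0 ↦
      h.ne' (applySeq_apply_eq_zero h0 E)
    have hx : 0 < x i := Nat.pos_of_ne_zero fun h0 ↦
      hy.ne' (applySeq_apply_eq_zero h0 [e])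
    have hstep := applyEvent_apply_cast hx e
    rw [ih h, seqShift_cons]
    omega

/-- Deletions only decrease a position, so positivity of the end result rules out any
intermediate truncation at `0`. -/
lemma applySeq_apply_cast_of_nonpos {x : CNP n} {i : Fin n} {E : List Event}
    (hE : ∀ e ∈ E, e.2.2 ≤ 0) (h : 0 < (x i : ℤ) + seqShift E (i + 1)) :
    (applySeq x E i : ℤ) = x i + seqShift E (i + 1) := by
  induction E generalizing x with
  | nil => simp [applySeq, seqShift]
  | cons e E ih =>
    have hE' : ∀ e' ∈ E, e'.2.2 ≤ 0 := fun e' he' ↦ hE e' (List.mem_cons_of_mem e he')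
    have hrest := seqShift_nonpos hE' (i + 1)
    have he := eventShift_nonpos (hE e List.mem_cons_self) (i + 1)
    rw [seqShift_cons] at h ⊢
    have hstep := applyEvent_apply_cast (e := e) (by omega : 0 < x i)
    rw [applySeq_cons, ih hE' (by omega)]
    omega

end Events

section Cost

variable {n : ℕ} {f : ℕ → ℤ → ℕ∞}

lemma eventCost_eq_one_or_top (hf : UnitCost f) (x : CNP n) {e : Event}
    (he : ValidEvent n e) : eventCost f x e = 1 ∨ eventCost f x e = ⊤ := by
  obtain ⟨h1, h2, h3, -⟩ := he
  have hne : (univ.filter fun i : Fin n ↦ e.1 ≤ (i : ℕ) + 1 ∧ (i : ℕ) + 1 ≤ e.2.1).Nonempty :=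
    ⟨⟨e.1 - 1, by omega⟩, by simp only [mem_filter, mem_univ, true_and]; omega⟩
  have hclosed : ∀ a ∈ ({1, ⊤} : Set ℕ∞), ∀ b ∈ ({1, ⊤} : Set ℕ∞), a ⊔ b ∈ ({1, ⊤} : Set ℕ∞) := by
    rintro a (rfl | rfl) b (rfl | rfl) <;> simp
  have := Finset.sup'_mem _ hclosed _ hne (fun i ↦ f (x i) e.2.2) fun i _ ↦ hf _ _
  rwa [Finset.sup'_eq_sup] at this

lemma seqCost_eq_length_or_top (hf : UnitCost f) (x : CNP n) {E : List Event}
    (hE : ∀ e ∈ E, ValidEvent n e) : seqCost f x E = E.length ∨ seqCost f x E = ⊤ := by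
  induction E generalizing x with
  | nil => simp [seqCost]
  | cons e E ih =>
    rcases eventCost_eq_one_or_top hf x (hE e List.mem_cons_self) with h | h
    · rcases ih (applyEvent x e) fun e' he' ↦ hE e' (List.mem_cons_of_mem e he') with h' | h'
      · left
        simp only [seqCost, h, h', List.length_cons, Nat.cast_succ]
        ring
      · simp [seqCost, h']
    · simp [seqCost, h]

lemma exists_seq_of_distf_eq_coe {u v : CNP n} {k : ℕ} (hdist : distf f u v = k) :
    ∃ E : List Event, (∀ e ∈ E, ValidEvent n e) ∧ applySeq u E = v ∧ seqCost f u E = k := by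
  have hne : { c | ∃ E : List Event, (∀ e ∈ E, ValidEvent n e) ∧ applySeq u E = v ∧
      seqCost f u E = c }.Nonempty := by
    rw [Set.nonempty_iff_ne_empty]
    intro h
    rw [distf, h, sInf_empty] at hdist
    exact ENat.top_ne_natCast k hdist
  exact hdist ▸ csInf_mem hne

lemma exists_seq_length_eq_of_distf_eq (hf : UnitCost f) {u v : CNP n} {k : ℕ}
    (hdist : distf f u v = k) :
    ∃ E : List Event, (∀ e ∈ E, ValidEvent n e) ∧ applySeq u E = v ∧ E.length = k := by
  obtain ⟨E, hE, happ, hcost⟩ := exists_seq_of_distf_eq_coe hdist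
  refine ⟨E, hE, happ, ?_⟩
  rcases seqCost_eq_length_or_top hf u hE with h | h <;> rw [hcost] at h
  · exact_mod_cast h.symm
  · exact absurd h (ENat.natCast_ne_top k)

end Cost

section Forest

variable {α : Type*} [Fintype α] [DecidableEq α] (r : α → α) (m : α → ℤ)

def childWeight (i : α) : ℤ :=
  ∑ j ∈ univ.filter (fun j ↦ r j = i ∧ j ≠ i), m j

lemma sum_childWeight (T : Finset α) :
    ∑ x ∈ T, childWeight r m x = ∑ j ∈ univ.filter (fun j ↦ r j ∈ T ∧ r j ≠ j), m j := by
  rw [← sum_fiberwise_of_maps_to (s := univ.filter fun j ↦ r j ∈ T ∧ r j ≠ j) (g := r) (t := T)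
    fun j hj ↦ (mem_filter.mp hj).2.1]
  refine sum_congr rfl fun x hx ↦ sum_congr ?_ fun _ _ ↦ rfl
  ext j
  simp only [mem_filter, mem_univ, true_and]
  constructor
  · rintro ⟨rfl, hj⟩
    exact ⟨⟨hx, Ne.symm hj⟩, rfl⟩
  · rintro ⟨⟨-, hj⟩, rfl⟩
    exact ⟨rfl, Ne.symm hj⟩

variable {r m}

/-- On an `r`-invariant set of non-fixed points every weight is counted again as a child weight,
which is impossible when each node outweighs its children. -/
lemma exists_isFixedPt_iterate (hm : ∀ i, 0 ≤ m i) (hchild : ∀ i, childWeight r m i < m i)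
    (i : α) : ∃ N, IsFixedPt r (r^[N] i) := by
  classical
  by_contra! hnot
  set A := univ.filter fun x ↦ ∃ N, r^[N] i = x
  have hA : A ⊆ univ.filter fun j ↦ r j ∈ A ∧ r j ≠ j := by
    intro x hx
    obtain ⟨N, rfl⟩ := (mem_filter.mp hx).2
    simp only [A, mem_filter, mem_univ, true_and]
    exact ⟨⟨N + 1, iterate_succ_apply' r N i⟩, hnot N⟩
  have hle : ∑ x ∈ A, m x ≤ ∑ x ∈ A, childWeight r m x := by
    rw [sum_childWeight]
    exact sum_le_sum_of_subset_of_nonneg hA fun j _ _ ↦ hm j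
  have hlt : ∑ x ∈ A, childWeight r m x < ∑ x ∈ A, m x :=
    sum_lt_sum_of_nonempty ⟨i, by simpa [A] using ⟨0, rfl⟩⟩ fun x _ ↦ hchild x
  exact (hle.trans_lt hlt).false

omit [Fintype α] [DecidableEq α] in
lemma iterate_eq_of_isFixedPt {x : α} {a b : ℕ} (ha : IsFixedPt r (r^[a] x))
    (hb : IsFixedPt r (r^[b] x)) : r^[a] x = r^[b] x := by
  wlog hab : a ≤ b generalizing a b
  · exact (this hb ha (le_of_not_ge hab)).symm
  obtain ⟨d, rfl⟩ := Nat.exists_eq_add_of_le hab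
  rw [add_comm, iterate_add_apply, iterate_fixed ha]

lemma sum_sub_childWeight_fiber {ρ : α → α} (hρr : ∀ i, ρ (r i) = ρ i)
    (hρid : ∀ i, IsFixedPt r i → ρ i = i) (hρfix : ∀ i, IsFixedPt r (ρ i)) (i₀ : α) :
    ∑ p ∈ univ.filter (ρ · = i₀), (m p - childWeight r m p) =
      if IsFixedPt r i₀ then m i₀ else 0 := by
  set F := univ.filter (ρ · = i₀)
  split_ifs with hi₀
  · have hchildren : (univ.filter fun j ↦ r j ∈ F ∧ r j ≠ j) = F.filter (¬ IsFixedPt r ·) := by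
      ext j
      simp only [F, mem_filter, mem_univ, true_and, hρr]
      rfl
    have hroots : F.filter (IsFixedPt r ·) = {i₀} := by
      ext j
      simp only [F, mem_filter, mem_univ, true_and, mem_singleton]
      refine ⟨fun ⟨hj, hfix⟩ ↦ hρid j hfix ▸ hj, ?_⟩
      rintro rfl
      exact ⟨hρid _ hi₀, hi₀⟩
    rw [sum_sub_distrib, sum_childWeight, hchildren,
      ← sum_filter_add_sum_filter_not F (IsFixedPt r ·), hroots, sum_singleton,
      add_sub_cancel_right]
  · refine sum_eq_zero fun p hp ↦ absurd ?_ hi₀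
    exact (mem_filter.mp hp).2 ▸ hρfix p

theorem exists_root_sum_sub_childWeight (hm : ∀ i, 0 ≤ m i)
    (hchild : ∀ i, childWeight r m i < m i) :
    ∃ ρ : α → α, (∀ i, IsFixedPt r (ρ i)) ∧ ∀ i₀,
      ∑ p ∈ univ.filter (ρ · = i₀), (m p - childWeight r m p) =
        if IsFixedPt r i₀ then m i₀ else 0 := by
  choose N hN using exists_isFixedPt_iterate hm hchild
  refine ⟨fun i ↦ r^[N i] i, hN, sum_sub_childWeight_fiber (fun i ↦ ?_) (fun i hi ↦ ?_) hN⟩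
  · rw [← iterate_succ_apply]
    exact iterate_eq_of_isFixedPt (by rw [iterate_succ_apply]; exact hN (r i)) (hN i)
  · exact iterate_eq_of_isFixedPt (a := N i) (b := 0) (hN i) hi

end Forest

lemma exists_equiv_fin_of_forall_lt {ι : Type*} [Fintype ι] {k : ℕ} (f : ι → ℕ)
    (hcard : Fintype.card ι ≤ k) (hf : ∀ q < k, ∃ i, f i = q) :
    ∃ e : ι ≃ Fin k, ∀ i, (e i : ℕ) = f i := by
  choose σ hσ using hf
  let σ' : Fin k → ι := fun q ↦ σ q q.isLt
  have hinj : Injective σ' := fun a b hab ↦ Fin.ext <| by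
    simpa only [σ', hσ] using congrArg f hab
  have hbij : Bijective σ' := (Fintype.bijective_iff_injective_and_card σ').mpr
    ⟨hinj, le_antisymm (by simpa using Fintype.card_le_of_injective σ' hinj) (by simpa using hcard)⟩
  refine ⟨(Equiv.ofBijective σ' hbij).symm, fun i ↦ ?_⟩
  conv_rhs => rw [← (Equiv.ofBijective σ' hbij).apply_symm_apply i]
  exact (hσ _ _).symm

lemma sum_fin_ite_lt_sub (w : ℕ → ℤ) {j k : ℕ} (hj : j ≤ k) :
    ∑ q : Fin k, (if (q : ℕ) < j then w (q + 1) - w q else 0) = w j - w 0 := by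
  rw [Fin.sum_univ_eq_sum_range (fun x ↦ if x < j then w (x + 1) - w x else 0), ← sum_filter,
    ← sum_range_sub]
  congr 1
  ext x
  simp only [mem_filter, mem_range]
  omega

section Staircase

variable {ι : Type*}

/-- The interval `[s i, t i]` with weight `c i` raises the step `coverage q → coverage (q + 1)`
by `|c i|` at `q = riseStep s t c i` and lowers it by `|c i|` at `q = fallStep s t c i`. -/
def riseStep (s t : ι → ℕ) (c : ι → ℤ) (i : ι) : ℕ :=
  if 0 < c i then s i - 1 else t i

def fallStep (s t : ι → ℕ) (c : ι → ℤ) (i : ι) : ℕ :=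
  if c i < 0 then s i - 1 else t i

variable {s t : ι → ℕ} {c : ι → ℤ}

lemma riseStep_ne_fallStep {i : ι} (hs : 1 ≤ s i) (hst : s i ≤ t i) (hc : c i ≠ 0) :
    riseStep s t c i ≠ fallStep s t c i := by
  unfold riseStep fallStep
  split_ifs <;> omega

lemma fallStep_le {i : ι} (hst : s i ≤ t i) : fallStep s t c i ≤ t i := by
  unfold fallStep
  split_ifs <;> omega

variable [Fintype ι]

def coverage (s t : ι → ℕ) (c : ι → ℤ) (j : ℕ) : ℤ :=
  ∑ i, if s i ≤ j ∧ j ≤ t i then c i else 0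

lemma coverage_neg (j : ℕ) : coverage s t (fun i ↦ -c i) j = -coverage s t c j := by
  unfold coverage
  rw [← sum_neg_distrib]
  refine sum_congr rfl fun i _ ↦ ?_
  split_ifs <;> simp

lemma coverage_zero (hs : ∀ i, 1 ≤ s i) : coverage s t c 0 = 0 :=
  sum_eq_zero fun i _ ↦ if_neg (by have := hs i; omega)

lemma coverage_succ_sub (hs : ∀ i, 1 ≤ s i) (hst : ∀ i, s i ≤ t i) (q : ℕ) :
    coverage s t c (q + 1) - coverage s t c q =
      ∑ i, ((if riseStep s t c i = q then |c i| else 0) -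
        (if fallStep s t c i = q then |c i| else 0)) := by
  unfold coverage riseStep fallStep
  rw [← sum_sub_distrib]
  refine sum_congr rfl fun i _ ↦ ?_
  have := hs i
  have := hst i
  rcases lt_trichotomy (c i) 0 with hc | hc | hc
  · simp only [abs_of_neg hc]
    split_ifs <;> omega
  · simp [hc]
  · simp only [abs_of_pos hc]
    split_ifs <;> omega

lemma exists_riseStep_eq (hs : ∀ i, 1 ≤ s i) (hst : ∀ i, s i ≤ t i) {q : ℕ}
    (hq : coverage s t c q < coverage s t c (q + 1)) : ∃ i, riseStep s t c i = q := by
  by_contra! hnone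
  have hstep := coverage_succ_sub (c := c) hs hst q
  simp only [hnone, if_false, zero_sub, sum_neg_distrib] at hstep
  have : 0 ≤ ∑ i, if fallStep s t c i = q then |c i| else 0 :=
    sum_nonneg fun i _ ↦ by split_ifs <;> simp
  linarith

lemma coverage_eq_of_lt (hst : ∀ i, s i ≤ t i) {k j : ℕ} (hrise : ∀ i, riseStep s t c i < k)
    (hj : k < j) :
    coverage s t c j = ∑ i, if k ≤ fallStep s t c i ∧ j ≤ t i then |c i| else 0 := by
  refine sum_congr rfl fun i _ ↦ ?_
  have := hst i
  have := hrise i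
  unfold riseStep fallStep at *
  rcases lt_trichotomy (c i) 0 with hc | hc | hc
  · simp only [if_pos hc, if_neg hc.not_gt] at *
    rw [if_neg (by omega), if_neg (by omega)]
  · simp [hc]
  · simp only [if_pos hc, if_neg hc.not_gt, abs_of_pos hc] at *
    exact if_congr (by omega) rfl rfl

/-- `e` enumerates the intervals by their rise step, so an interval falling at a step `q < k`
hangs below the interval rising at `q`. -/
def parent (s t : ι → ℕ) (c : ι → ℤ) {k : ℕ} (e : ι ≃ Fin k) (i : ι) : ι :=
  if h : fallStep s t c i < k then e.symm ⟨_, h⟩ else i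

section Parent

variable {k : ℕ} {e : ι ≃ Fin k} (hs : ∀ i, 1 ≤ s i) (hst : ∀ i, s i ≤ t i) (hc : ∀ i, c i ≠ 0)
  (he : ∀ i, (e i : ℕ) = riseStep s t c i)
include hs hst hc he

omit [Fintype ι] in
lemma isFixedPt_parent_iff {i : ι} : IsFixedPt (parent s t c e) i ↔ k ≤ fallStep s t c i := by
  rw [IsFixedPt, parent]
  split_ifs with h
  · refine iff_of_false (fun hfix ↦ riseStep_ne_fallStep (hs i) (hst i) (hc i) ?_) (by omega)
    rw [← he, ← hfix, e.apply_symm_apply, hfix]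
  · simpa using h

lemma childWeight_parent [DecidableEq ι] (i : ι) :
    childWeight (parent s t c e) (|c ·|) i =
      ∑ j, if fallStep s t c j = riseStep s t c i then |c j| else 0 := by
  rw [childWeight, sum_filter]
  refine sum_congr rfl fun j _ ↦ if_congr ?_ rfl rfl
  unfold parent
  constructor
  · rintro ⟨hj, hji⟩
    split_ifs at hj with h
    · rw [← he, ← hj, e.apply_symm_apply]
    · exact absurd hj hji
  · intro hj
    have hlt : fallStep s t c j < k := hj ▸ he i ▸ (e i).isLt
    refine ⟨by rw [dif_pos hlt, e.symm_apply_eq]; exact Fin.ext (hj.trans (he i).symm), ?_⟩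
    rintro rfl
    exact riseStep_ne_fallStep (hs j) (hst j) (hc j) hj.symm

lemma abs_sub_childWeight_parent [DecidableEq ι] (i : ι) :
    |c i| - childWeight (parent s t c e) (|c ·|) i =
      coverage s t c (riseStep s t c i + 1) - coverage s t c (riseStep s t c i) := by
  have hrise : ∀ j, riseStep s t c j = riseStep s t c i ↔ j = i := fun j ↦ by
    rw [← he, ← he, Fin.val_inj, e.apply_eq_iff_eq]
  simp only [coverage_succ_sub hs hst, sum_sub_distrib, hrise, sum_ite_eq', mem_univ, if_true,
    childWeight_parent hs hst hc he]

end Parent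

theorem exists_smooth_coverage (hs : ∀ i, 1 ≤ s i) (hst : ∀ i, s i ≤ t i) (hc : ∀ i, c i ≠ 0)
    {k : ℕ} (hcard : Fintype.card ι ≤ k)
    (hstair : ∀ q < k, coverage s t c q < coverage s t c (q + 1)) :
    ∃ b : Fin k → ι, (∀ q, k ≤ t (b q)) ∧
      coverage (fun q : Fin k ↦ (q : ℕ) + 1) (fun q ↦ t (b q))
        (fun q ↦ coverage s t c (q + 1) - coverage s t c q) = coverage s t c := by
  classical
  set w := coverage s t c
  obtain ⟨e, he⟩ := exists_equiv_fin_of_forall_lt (riseStep s t c) hcard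
    fun q hq ↦ exists_riseStep_eq hs hst (hstair q hq)
  have hrise : ∀ i, riseStep s t c i < k := fun i ↦ he i ▸ (e i).isLt
  have hchild : ∀ i, childWeight (parent s t c e) (|c ·|) i < |c i| := fun i ↦ by
    have := hstair _ (hrise i)
    linarith [abs_sub_childWeight_parent hs hst hc he i]
  obtain ⟨ρ, hρfix, hρsum⟩ :=
    exists_root_sum_sub_childWeight (fun i ↦ abs_nonneg (c i)) hchild
  have hroot : ∀ i, k ≤ t (ρ i) := fun i ↦
    ((isFixedPt_parent_iff hs hst hc he).mp (hρfix i)).trans (fallStep_le (hst _))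
  refine ⟨fun q ↦ ρ (e.symm q), fun q ↦ hroot _, funext fun j ↦ ?_⟩
  rcases le_or_gt j k with hj | hj
  · calc _ = ∑ q : Fin k, (if (q : ℕ) < j then w (q + 1) - w q else 0) :=
          sum_congr rfl fun q _ ↦ if_congr (by have := hroot (e.symm q); dsimp only; omega) rfl rfl
      _ = w j := by rw [sum_fin_ite_lt_sub w hj, show w 0 = 0 from coverage_zero hs, sub_zero]
  · calc _ = ∑ i, (if j ≤ t (ρ i) then |c i| - childWeight (parent s t c e) (|c ·|) i else 0) := by
          rw [coverage, ← e.symm.sum_comp]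
          refine sum_congr rfl fun i _ ↦ if_congr (by dsimp only; omega) ?_ rfl
          rw [abs_sub_childWeight_parent hs hst hc he, ← he, e.apply_symm_apply]
      _ = ∑ i₀, if j ≤ t i₀ then ∑ p ∈ univ.filter (ρ · = i₀),
            (|c p| - childWeight (parent s t c e) (|c ·|) p) else 0 := by
          rw [← sum_fiberwise univ ρ]
          refine sum_congr rfl fun i₀ _ ↦ ?_
          split_ifs with h
          · exact sum_congr rfl fun p hp ↦ if_pos ((mem_filter.mp hp).2 ▸ h)
          · exact sum_eq_zero fun p hp ↦ if_neg ((mem_filter.mp hp).2 ▸ h)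
      _ = ∑ i₀, if k ≤ fallStep s t c i₀ ∧ j ≤ t i₀ then |c i₀| else 0 := by
          refine sum_congr rfl fun i₀ _ ↦ ?_
          simp only [hρsum, isFixedPt_parent_iff hs hst hc he]
          split_ifs <;> tauto
      _ = w j := (coverage_eq_of_lt hst hrise hj).symm

end Staircase

section Scenarios

variable {n : ℕ}

lemma diffExt_succ (u v : CNP n) (i : Fin n) : diffExt u v (i + 1) = (u i : ℤ) - v i := by
  rw [diffExt, dif_pos ⟨by omega, i.isLt⟩]
  rfl

lemma seqShift_ofFn {k : ℕ} (ev : Fin k → Event) (p : ℕ) :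
    seqShift (List.ofFn ev) p =
      coverage (fun q ↦ (ev q).1) (fun q ↦ (ev q).2.1) (fun q ↦ (ev q).2.2) p := by
  rw [seqShift, List.map_ofFn, List.sum_ofFn]
  rfl

lemma coverage_eq_diffExt {u v : CNP n} {E : List Event} (hE : ∀ e ∈ E, ValidEvent n e)
    (happ : applySeq u E = v) (hv : ∀ i, 0 < v i) :
    coverage (fun i : Fin E.length ↦ E[(i : ℕ)].1) (fun i ↦ E[(i : ℕ)].2.1)
      (fun i ↦ -E[(i : ℕ)].2.2) =
      diffExt u v := by
  funext j
  by_cases hj : 1 ≤ j ∧ j ≤ n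
  · obtain ⟨p, rfl⟩ : ∃ p : Fin n, (p : ℕ) + 1 = j := ⟨⟨j - 1, by omega⟩, by simp; omega⟩
    have hcast := applySeq_apply_cast_of_pos (happ ▸ hv p : 0 < applySeq u E p)
    rw [happ, ← List.ofFn_getElem (xs := E), seqShift_ofFn] at hcast
    rw [coverage_neg, diffExt_succ]
    omega
  · rw [diffExt, dif_neg hj]
    refine sum_eq_zero fun i _ ↦ if_neg ?_
    have := hE _ (List.getElem_mem i.isLt)
    unfold ValidEvent at this
    dsimp only
    omega

lemma applySeq_ofFn_eq_of_coverage {u v : CNP n} (hv : ∀ i, 0 < v i) {k : ℕ}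
    {ev : Fin k → Event} (hdel : ∀ q, (ev q).2.2 ≤ 0)
    (hcov : coverage (fun q ↦ (ev q).1) (fun q ↦ (ev q).2.1) (fun q ↦ -(ev q).2.2) = diffExt u v) :
    applySeq u (List.ofFn ev) = v := by
  funext i
  have hshift : seqShift (List.ofFn ev) (i + 1) = (v i : ℤ) - u i := by
    rw [seqShift_ofFn, ← neg_sub, ← diffExt_succ, ← hcov, coverage_neg, neg_neg]
  have hdel' : ∀ e ∈ List.ofFn ev, e.2.2 ≤ 0 := by
    simpa only [List.mem_ofFn, forall_exists_index, forall_apply_eq_imp_iff] using hdel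
  have := hv i
  have := applySeq_apply_cast_of_nonpos (x := u) (i := i) hdel' (by omega)
  omega

end Scenarios

theorem stmt10_general {n : ℕ} (u v : CNP n) (hv : ∀ i, 0 < v i)
    (f : ℕ → ℤ → ℕ∞) (hf : UnitCost f)
    (k : ℕ)
    (hpos : 0 < diffExt u v 1)
    (hstair : ∀ i, 1 ≤ i → i < k → diffExt u v i < diffExt u v (i + 1))
    (hdist : distf f u v = (k : ℕ∞)) :
    ∃ E : List Event, (∀ e ∈ E, ValidEvent n e) ∧ applySeq u E = v ∧ E.length = k ∧
      ∀ j, j < k → ∃ b, k ≤ b ∧ b ≤ n ∧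
        E[j]? = some (j + 1, b, diffExt u v j - diffExt u v (j + 1)) := by
  obtain ⟨E, hE, happ, hlen⟩ := exists_seq_length_eq_of_distf_eq hf hdist
  have hvalid : ∀ i : Fin E.length, ValidEvent n E[(i : ℕ)] := fun i ↦
    hE _ (List.getElem_mem i.isLt)
  have hw := coverage_eq_diffExt hE happ hv
  have hinc : ∀ q < k, diffExt u v q < diffExt u v (q + 1) := by
    rintro (_ | q) hq
    · simpa [diffExt] using hpos
    · exact hstair _ (by omega) hq
  obtain ⟨b, hbk, hcov⟩ := exists_smooth_coverage (fun i ↦ (hvalid i).1) (fun i ↦ (hvalid i).2.1)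
    (fun i ↦ neg_ne_zero.mpr (hvalid i).2.2.2) (by simp [hlen]) (hw ▸ hinc)
  rw [hw] at hcov
  set ev : Fin k → Event := fun q ↦ (q + 1, E[(b q : ℕ)].2.1, diffExt u v q - diffExt u v (q + 1))
  refine ⟨List.ofFn ev, ?_, applySeq_ofFn_eq_of_coverage hv (fun q ↦ ?_) ?_, List.length_ofFn,
    fun j hj ↦ ⟨E[(b ⟨j, hj⟩ : ℕ)].2.1, hbk _, (hvalid _).2.2.1, by simp [ev, hj]⟩⟩
  · simp only [List.mem_ofFn, forall_exists_index]
    rintro _ q rfl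
    exact ⟨Nat.le_add_left 1 q, q.isLt.trans_le (hbk q), (hvalid _).2.2.1,
      (sub_neg.mpr (hinc q q.isLt)).ne⟩
  · linarith [hinc q q.isLt]
  · simpa only [ev, neg_sub] using hcov

/-- if `u, v` have no null positions, `w = u - v` has a staircase on `[1, k]`
(`0 < w_1 < ... < w_k`, 1-based) and `dist_f(u,v) = k` for a unit-cost `f`, then there is a
smooth sequence transforming `u` into `v`: events `e_i = (i, b_i, w_{i-1} - w_i)` with
`b_i ≥ k`, for `i = 1, ..., k` (with `w_0 = 0`). -/
theorem stmt10 {n : ℕ} (u v : CNP n) (hu : ∀ i, 0 < u i) (hv : ∀ i, 0 < v i)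
    (f : ℕ → ℤ → ℕ∞) (hf : UnitCost f)
    (k : ℕ) (hk1 : 1 ≤ k) (hkn : k ≤ n)
    (hpos : 0 < diffExt u v 1)
    (hstair : ∀ i, 1 ≤ i → i < k → diffExt u v i < diffExt u v (i + 1))
    (hdist : distf f u v = (k : ℕ∞)) :
    ∃ E : List Event, (∀ e ∈ E, ValidEvent n e) ∧ applySeq u E = v ∧ E.length = k ∧
      ∀ j, j < k → ∃ b, k ≤ b ∧ b ≤ n ∧
        E[j]? = some (j + 1, b, diffExt u v j - diffExt u v (j + 1)) :=
  stmt10_general u v hv f hf k hpos hstair hdist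
end

section
/- For the family of instances with u − v = (1, 2, 3, ..., k−1, k, k−1, ..., 3, 2, 1) (dimension n = 2k−1) and u, v without null positions where no entry of u drops to zero during the process, dist_any(u,v) ≤ k: there is a sequence of k events transforming u into v, each event reducing the number of maximal flat intervals of the difference vector by 2. -/
/-!
Since `v > 0` and the profile never drops below `v`, every event `e_m = (m, 2k - m, -1)` acts on
its whole range, so after `j` events the extended difference vector is the staircase cut down by
`j`, `i ↦ max (min i (2k - i) - j) 0`. A maximal flat interval is determined by its right end, so
their number is one more than the number of breakpoints `w i ≠ w (i + 1)`; the cut staircase has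
the `2 (k - j)` breakpoints `j ≤ i < 2k - j`, hence each event removes two flat intervals.
-/

open scoped ENat

open Finset

section MaximalFlatIntervals

variable {n : ℕ} {w : ℕ → ℤ} {a b : ℕ}

lemma isFlat_iff_eq_right (hab : a ≤ b) (hb : b ≤ n + 1) :
    IsFlat n w a b ↔ ∀ i, a ≤ i → i ≤ b → w i = w b :=
  ⟨fun h i hai hib => h.2.2 i b hai hib hab le_rfl,
    fun h => ⟨hab, hb, fun i j hai hib haj hjb => (h i hai hib).trans (h j haj hjb).symm⟩⟩

lemma isMaxFlat_iff :
    IsMaxFlat n w a b ↔ a ≤ b ∧ b ≤ n + 1 ∧ (∀ i, a ≤ i → i ≤ b → w i = w b) ∧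
      (a = 0 ∨ w (a - 1) ≠ w a) ∧ (b = n + 1 ∨ w b ≠ w (b + 1)) := by
  constructor
  · rintro ⟨hflat, hmax⟩
    have ⟨hab, hb, _⟩ := hflat
    have hconst := (isFlat_iff_eq_right hab hb).1 hflat
    refine ⟨hab, hb, hconst, ?_, ?_⟩
    · by_contra! hleft
      have hext : IsFlat n w (a - 1) b := (isFlat_iff_eq_right (by omega) hb).2 fun i hi hib => by
        rcases (show i = a - 1 ∨ a ≤ i by omega) with rfl | hai
        · rw [hleft.2, hconst a le_rfl hab]
        · exact hconst i hai hib
      have := (hmax (a - 1) b (by omega) le_rfl hext).1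
      omega
    · by_contra! hright
      have hext : IsFlat n w a (b + 1) := (isFlat_iff_eq_right (by omega) (by omega)).2
        fun i hai hib => by
          rcases (show i = b + 1 ∨ i ≤ b by omega) with rfl | hib
          · rfl
          · rw [hconst i hai hib, hright.2]
      have := (hmax a (b + 1) le_rfl (by omega) hext).2
      omega
  · rintro ⟨hab, hb, hconst, hleft, hright⟩
    refine ⟨(isFlat_iff_eq_right hab hb).2 hconst,
      fun a' b' ha' hb' ⟨_, hb'n, hflat'⟩ => ⟨?_, ?_⟩⟩
    · by_contra hne
      have := hflat' (a - 1) a (by omega) (by omega) ha' (by omega)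
      omega
    · by_contra hne
      have := hflat' b (b + 1) (by omega) (by omega) (by omega) (by omega)
      omega

lemma exists_flat_run_ending_at (w : ℕ → ℤ) (b : ℕ) :
    ∃ a ≤ b, (∀ i, a ≤ i → i ≤ b → w i = w b) ∧ (a = 0 ∨ w (a - 1) ≠ w a) := by
  induction b with
  | zero => exact ⟨0, le_rfl, fun i _ hi => by rw [Nat.le_zero.1 hi], Or.inl rfl⟩
  | succ b ih =>
    by_cases hstep : w b = w (b + 1)
    · obtain ⟨a, hab, hconst, hleft⟩ := ih
      refine ⟨a, by omega, fun i hai hib => ?_, hleft⟩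
      rcases (show i = b + 1 ∨ i ≤ b by omega) with rfl | hib
      · rfl
      · rw [hconst i hai hib, hstep]
    · exact ⟨b + 1, le_rfl, fun i hai hib => by rw [le_antisymm hib hai], Or.inr hstep⟩

theorem numFlat_eq_card_breakpoints_add_one (n : ℕ) (w : ℕ → ℤ) :
    numFlat n w = #{i ∈ range (n + 1) | w i ≠ w (i + 1)} + 1 := by
  set S := {b ∈ range (n + 2) | b = n + 1 ∨ w b ≠ w (b + 1)}
  have hS : S = insert (n + 1) {i ∈ range (n + 1) | w i ≠ w (i + 1)} := by
    ext
    simp only [ne_eq, mem_filter, mem_range, mem_insert, Order.lt_add_one_iff, S]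
    omega
  let rightEnd : {p : ℕ × ℕ // IsMaxFlat n w p.1 p.2} → S := fun p =>
    have hp := isMaxFlat_iff.1 p.2
    ⟨p.1.2, by simp only [S, mem_filter, mem_range]; exact ⟨by omega, hp.2.2.2.2⟩⟩
  have hbij : Function.Bijective rightEnd := by
    constructor
    · rintro ⟨⟨a, b⟩, hp⟩ ⟨⟨a', b'⟩, hp'⟩ hend
      obtain rfl : b = b' := congrArg Subtype.val hend
      rw [isMaxFlat_iff] at hp hp'
      dsimp only at hp hp'
      obtain ⟨hab, -, hconst, hleft, -⟩ := hp
      obtain ⟨hab', -, hconst', hleft', -⟩ := hp'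
      have : a = a' := by
        by_contra hne
        rcases Nat.lt_or_gt_of_ne hne with h | h
        · have := (hconst (a' - 1) (by omega) (by omega)).trans
            (hconst a' (by omega) (by omega)).symm
          omega
        · have := (hconst' (a - 1) (by omega) (by omega)).trans
            (hconst' a (by omega) (by omega)).symm
          omega
      subst this
      rfl
    · rintro ⟨b, hb⟩
      simp only [S, mem_filter, mem_range] at hb
      obtain ⟨a, hab, hconst, hleft⟩ := exists_flat_run_ending_at w b
      exact ⟨⟨(a, b), isMaxFlat_iff.2 ⟨hab, by omega, hconst, hleft, hb.2⟩⟩, rfl⟩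
  rw [numFlat, Nat.card_eq_of_bijective rightEnd hbij, Nat.card_eq_fintype_card, Fintype.card_coe,
    hS, card_insert_of_notMem (by simp)]

end MaximalFlatIntervals

lemma seqCost_anyCost {n : ℕ} (u : CNP n) {E : List Event} (hE : ∀ e ∈ E, ValidEvent n e) :
    seqCost anyCost u E = E.length := by
  induction E generalizing u with
  | nil => simp [seqCost]
  | cons e E ih =>
    obtain ⟨hs, hst, ht, -⟩ := hE e (by simp)
    have hcost : eventCost anyCost u e = 1 := sup_const ⟨⟨e.1 - 1, by omega⟩, by
      simp only [Order.add_one_le_iff, mem_filter, mem_univ, true_and]; omega⟩ 1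
    rw [seqCost, hcost, ih _ fun e' he' => hE e' (by simp [he'])]
    simp [add_comm]

lemma distAny_le_length {n : ℕ} {u v : CNP n} {E : List Event} (hE : ∀ e ∈ E, ValidEvent n e)
    (hv : applySeq u E = v) : distAny u v ≤ E.length :=
  sInf_le ⟨E, hE, hv, seqCost_anyCost u hE⟩

lemma applyEvent_neg_one {n : ℕ} (p : CNP n) (hp : ∀ i, 0 < p i) (s t : ℕ) :
    applyEvent p (s, t, -1) =
      fun i : Fin n => if s ≤ (i : ℕ) + 1 ∧ (i : ℕ) + 1 ≤ t then p i - 1 else p i := by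
  funext i
  have := hp i
  simp only [applyEvent]
  split_ifs <;> omega

section Staircase

/-- The events `e_m = (m, 2k - m, -1)`, `m = 1, …, k`. -/
def staircaseEvents (k : ℕ) : List Event :=
  (List.range k).map fun m => (m + 1, 2 * k - (m + 1), -1)

def staircase (k j : ℕ) (i : ℕ) : ℤ := max (min (i : ℤ) (2 * k - i) - j) 0

lemma staircaseEvents_valid (k : ℕ) : ∀ e ∈ staircaseEvents k, ValidEvent (2 * k - 1) e := by
  simp only [staircaseEvents, List.mem_map, List.mem_range]
  rintro _ ⟨m, hm, rfl⟩
  refine ⟨?_, ?_, ?_, ?_⟩ <;> dsimp only <;> omega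

lemma staircaseEvents_take {k j : ℕ} (hj : j ≤ k) :
    (staircaseEvents k).take j = (List.range j).map fun m => (m + 1, 2 * k - (m + 1), -1) := by
  rw [staircaseEvents, ← List.map_take, List.take_range, min_eq_left hj]

variable {k : ℕ} {u v : CNP (2 * k - 1)}

lemma applySeq_staircaseEvents_take (hv : ∀ i, 0 < v i)
    (hw : ∀ i : Fin (2 * k - 1),
      (u i : ℤ) - (v i : ℤ) = min ((i : ℕ) + 1 : ℤ) ((2 * k : ℤ) - ((i : ℕ) + 1)))
    {j : ℕ} (hj : j ≤ k) :
    applySeq u ((staircaseEvents k).take j) =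
      fun i => v i + (min ((i : ℕ) + 1) (2 * k - ((i : ℕ) + 1)) - j) := by
  rw [staircaseEvents_take hj]
  induction j with
  | zero =>
    funext i
    have := hw i
    simp only [List.range_zero, List.map_nil, applySeq, List.foldl_nil]
    omega
  | succ j ih =>
    rw [List.range_succ, List.map_append, applySeq, List.map_singleton, List.foldl_concat,
      ← applySeq, ih (by omega), applyEvent_neg_one _ fun i => by have := hv i; omega]
    funext i
    split_ifs <;> omega

lemma diffExt_applySeq_staircaseEvents_take (hv : ∀ i, 0 < v i)
    (hw : ∀ i : Fin (2 * k - 1),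
      (u i : ℤ) - (v i : ℤ) = min ((i : ℕ) + 1 : ℤ) ((2 * k : ℤ) - ((i : ℕ) + 1)))
    {j : ℕ} (hj : j ≤ k) :
    diffExt (applySeq u ((staircaseEvents k).take j)) v = staircase k j := by
  rw [applySeq_staircaseEvents_take hv hw hj]
  funext i
  simp only [diffExt, staircase]
  split <;> omega

lemma numFlat_staircase {k j : ℕ} (hj : j ≤ k) :
    numFlat (2 * k - 1) (staircase k j) = 2 * (k - j) + 1 := by
  have hbreaks : {i ∈ range (2 * k - 1 + 1) | staircase k j i ≠ staircase k j (i + 1)} =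
      Ico j (2 * k - j) := by
    ext i
    simp only [staircase, Nat.cast_add, Nat.cast_one, ne_eq, mem_filter, mem_range, mem_Ico]
    omega
  rw [numFlat_eq_card_breakpoints_add_one, hbreaks, Nat.card_Ico]
  omega

end Staircase

theorem stmt11_general (k : ℕ) (u v : CNP (2 * k - 1))
    (hv : ∀ i, 0 < v i)
    (hw : ∀ i : Fin (2 * k - 1),
      (u i : ℤ) - (v i : ℤ) = min ((i : ℕ) + 1 : ℤ) ((2 * k : ℤ) - ((i : ℕ) + 1))) :
    (∃ E : List Event, (∀ e ∈ E, ValidEvent (2 * k - 1) e) ∧ E.length = k ∧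
      applySeq u E = v ∧
      ∀ j, j < k →
        numFlat (2 * k - 1) (diffExt (applySeq u (E.take (j + 1))) v) =
          numFlat (2 * k - 1) (diffExt (applySeq u (E.take j)) v) - 2) ∧
    distAny u v ≤ (k : ℕ∞) := by
  have hlength : (staircaseEvents k).length = k := by simp [staircaseEvents]
  have hfinal : applySeq u (staircaseEvents k) = v := by
    rw [← List.take_of_length_le hlength.le, applySeq_staircaseEvents_take hv hw le_rfl]
    funext i
    omega
  refine ⟨⟨staircaseEvents k, staircaseEvents_valid k, hlength, hfinal, fun j hj => ?_⟩, ?_⟩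
  · rw [diffExt_applySeq_staircaseEvents_take hv hw hj, numFlat_staircase hj,
      diffExt_applySeq_staircaseEvents_take hv hw hj.le, numFlat_staircase hj.le]
    omega
  · simpa [hlength] using distAny_le_length (staircaseEvents_valid k) hfinal

/-- for the symmetric-staircase family, where `u - v = (1,2,...,k-1,k,k-1,...,2,1)`
(dimension `2k - 1`) and `u, v` have no null positions, there is a sequence of `k` events
transforming `u` into `v`, each reducing the number of maximal flat intervals of the
difference vector by 2; in particular `dist_any(u, v) ≤ k`. -/
theorem stmt11 (k : ℕ) (hk : 1 ≤ k) (u v : CNP (2 * k - 1))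
    (hu : ∀ i, 0 < u i) (hv : ∀ i, 0 < v i)
    (hw : ∀ i : Fin (2 * k - 1),
      (u i : ℤ) - (v i : ℤ) = min ((i : ℕ) + 1 : ℤ) ((2 * k : ℤ) - ((i : ℕ) + 1))) :
    (∃ E : List Event, (∀ e ∈ E, ValidEvent (2 * k - 1) e) ∧ E.length = k ∧
      applySeq u E = v ∧
      ∀ j, j < k →
        numFlat (2 * k - 1) (diffExt (applySeq u (E.take (j + 1))) v) =
          numFlat (2 * k - 1) (diffExt (applySeq u (E.take j)) v) - 2) ∧
    distAny u v ≤ (k : ℕ∞) :=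
  stmt11_general k u v hv hw
end
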